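/- arXiv:1410.7332 — 4 statements merged into one kernel-verified Lean document; each statement's English description precedes it below -/
import Mathlib

section
/- The order function o : 𝒜 → ℕ is a weak contraction, i.e. |o(A) − o(B)| ≤ d(A,B) for all A, B ∈ 𝒜, but it is not a contraction: there is no constant c ∈ [0,1) such that |o(A) − o(B)| ≤ c·d(A,B) for all A, B ∈ 𝒜. -/
/-- `A ⊆ ℕ` is an additive basis: `0 ∈ A` and there is `h ≥ 1` such that every natural
number is a sum of exactly `h` elements of `A`. -/
def IsAddBasis (A : Set ℕ) : Prop :=
  0 ∈ A ∧ ∃ h : ℕ, 1 ≤ h ∧ ∀ n : ℕ, ∃ f : Fin h → ℕ, (∀ i, f i ∈ A) ∧ ∑ i, f i = n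

/-- The order `o(A)` of an additive basis: the least `h ≥ 1` with `hA = ℕ`. -/
noncomputable def basisOrder (A : Set ℕ) : ℕ :=
  sInf {h : ℕ | 1 ≤ h ∧ ∀ n : ℕ, ∃ f : Fin h → ℕ, (∀ i, f i ∈ A) ∧ ∑ i, f i = n}

/-- `Σ_{α ∈ A △ B} 1/α²` (the sum over the symmetric difference of `A` and `B`). -/
noncomputable def sdSum (A B : Set ℕ) : ℝ :=
  ∑' α : ↥(symmDiff A B), (1 : ℝ) / ((α : ℕ) : ℝ) ^ 2

/-- The distance `d(A,B) = |o(A) − o(B)| + Σ_{α ∈ A △ B} 1/α²`. -/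
noncomputable def basisDist (A B : Set ℕ) : ℝ :=
  |(basisOrder A : ℝ) - (basisOrder B : ℝ)| + sdSum A B

def Bset (m : ℕ) : Set ℕ := {0, 1} ∪ {n | m ≤ n}

lemma Bset_mem_prop (m : ℕ) (hm : 2 ≤ m) :
    (m - 1) ∈ {h : ℕ | 1 ≤ h ∧ ∀ n : ℕ, ∃ f : Fin h → ℕ,
      (∀ i, f i ∈ Bset m) ∧ ∑ i, f i = n} := by
  constructor
  · omega
  · intro n
    by_cases hn : n < m
    · refine ⟨fun i => if (i : ℕ) < n then 1 else 0, ?_, ?_⟩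
      · intro i
        by_cases h : (i : ℕ) < n <;> simp [h, Bset]
      · rw [Fin.sum_univ_eq_sum_range (fun i => if i < n then 1 else 0)]
        have : (Finset.range (m-1)).filter (· < n) = Finset.range n := by
          ext i; simp [Finset.mem_filter]; omega
        rw [Finset.sum_ite, Finset.sum_const_zero, add_zero, Finset.sum_const, this]
        simp
    · refine ⟨fun i => if i = ⟨0, by omega⟩ then n else 0, ?_, ?_⟩
      · intro i
        by_cases h : i = ⟨0, by omega⟩ <;> simp [h, Bset]
        omega
      · rw [Finset.sum_ite_eq' Finset.univ (⟨0, by omega⟩ : Fin (m-1)) (fun _ => n)]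
        simp

lemma isAddBasis_Bset (m : ℕ) (hm : 2 ≤ m) : IsAddBasis (Bset m) := by
  exact ⟨Or.inl (Or.inl rfl), ⟨m - 1, Bset_mem_prop m hm⟩⟩

lemma order_Bset (m : ℕ) (hm : 2 ≤ m) : basisOrder (Bset m) = m - 1 := by
  apply le_antisymm
  · exact Nat.sInf_le (Bset_mem_prop m hm)
  · apply le_csInf ⟨m - 1, Bset_mem_prop m hm⟩
    rintro h ⟨h1, hall⟩
    obtain ⟨f, hfA, hfs⟩ := hall (m - 1)
    by_cases hbig : ∃ i, m ≤ f i
    · obtain ⟨i, hi⟩ := hbig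
      have : f i ≤ ∑ j, f j := Finset.single_le_sum (fun j _ => Nat.zero_le _) (Finset.mem_univ i)
      omega
    · push_neg at hbig
      have hle : ∀ i, f i ≤ 1 := by
        intro i
        have h := hfA i
        have hb := hbig i
        simp [Bset] at h
        omega
      have : ∑ i, f i ≤ ∑ _i : Fin h, 1 := Finset.sum_le_sum fun i _ => hle i
      simp at this
      omega

lemma symmDiff_Bset (m : ℕ) (hm : 2 ≤ m) :
    symmDiff (Bset (m+1)) (Bset m) = {m} := by
  ext n
  simp [symmDiff, Bset, Set.mem_union, Set.mem_setOf_eq]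
  omega

lemma sdSum_Bset (m : ℕ) (hm : 2 ≤ m) :
    sdSum (Bset (m+1)) (Bset m) = 1 / (m : ℝ) ^ 2 := by
  unfold sdSum
  rw [symmDiff_Bset m hm]
  exact tsum_singleton m (fun α => (1 : ℝ) / (α : ℝ) ^ 2)

/-- The order function `o : 𝒜 → ℕ` is a weak contraction, i.e.
`|o(A) − o(B)| ≤ d(A,B)`, but it is not a contraction: there is no `c ∈ [0,1)` with
`|o(A) − o(B)| ≤ c·d(A,B)` for all additive bases `A`, `B`. -/
theorem order_weak_contraction_not_contraction :
    (∀ A B : Set ℕ, IsAddBasis A → IsAddBasis B →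
      |(basisOrder A : ℝ) - (basisOrder B : ℝ)| ≤ basisDist A B) ∧
    ¬ ∃ c : ℝ, 0 ≤ c ∧ c < 1 ∧ ∀ A B : Set ℕ, IsAddBasis A → IsAddBasis B →
      |(basisOrder A : ℝ) - (basisOrder B : ℝ)| ≤ c * basisDist A B := by

  constructor
  · intro A B _ _
    have h0 : 0 ≤ sdSum A B := tsum_nonneg fun α => by positivity
    unfold basisDist
    linarith
  · rintro ⟨c, hc0, hc1, hc⟩
    obtain ⟨m0, hm0⟩ := exists_nat_gt (c / (1 - c))
    set m : ℕ := m0 + 2 with hmdef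
    have hm : 2 ≤ m := by omega
    have hmR : c / (1 - c) < (m : ℝ) := by
      have : (m0 : ℝ) ≤ m := by exact_mod_cast Nat.le_add_right m0 2
      linarith
    have key := hc (Bset (m+1)) (Bset m) (isAddBasis_Bset (m+1) (by omega)) (isAddBasis_Bset m hm)
    rw [order_Bset (m+1) (by omega), order_Bset m hm] at key
    have hords : ((m + 1 - 1 : ℕ) : ℝ) - ((m - 1 : ℕ) : ℝ) = 1 := by
      have h1 : (m + 1 - 1 : ℕ) = m := by omega
      have h2 : ((m - 1 : ℕ) : ℝ) = (m : ℝ) - 1 := by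
        rw [Nat.cast_sub (by omega)]; simp
      rw [h1, h2]; ring
    unfold basisDist at key
    rw [order_Bset (m+1) (by omega), order_Bset m hm, sdSum_Bset m hm, hords] at key
    simp only [abs_one] at key
    have hmpos : (0:ℝ) < m := by positivity
    have hlt : c * (1 + 1 / (m:ℝ)^2) < 1 := by
      have h1 : c < (1 - c) * m := by
        rw [div_lt_iff₀ (by linarith)] at hmR; linarith
      have hm1 : (1:ℝ) ≤ (m:ℝ) := by exact_mod_cast (by omega : 1 ≤ m)
      have h2 : (m:ℝ) ≤ (m:ℝ)^2 := by nlinarith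
      have h3 : c < (1 - c) * (m:ℝ)^2 := by nlinarith
      have h4 : c * (1/(m:ℝ)^2) < 1 - c := by
        rw [mul_one_div, div_lt_iff₀ (by positivity)]; nlinarith
      nlinarith
    linarith
end

section
/- Let (A_n)_{n∈ℕ} be a sequence of additive bases and let A ⊆ ℕ. If for every ε > 0 there exists n₀ such that Σ_{α ∈ A_n △ A} 1/α² < ε for all n ≥ n₀, then A = ⋃_{m=0}^{∞} ⋂_{n=m}^{∞} A_n. -/
open scoped ENNReal

/-- If `(A_n)` is a sequence of additive bases, `A ⊆ ℕ`, and for every `ε > 0` there is `n₀`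
with `Σ_{α ∈ A_n △ A} 1/α² < ε` for all `n ≥ n₀`, then `A = ⋃_m ⋂_{n ≥ m} A_n`.
(The sum is computed in `ℝ≥0∞`, so that the term corresponding to `α = 0` is `∞`.) -/
theorem eq_iUnion_iInter_of_pseudoconv (Aseq : ℕ → Set ℕ) (hseq : ∀ n, IsAddBasis (Aseq n))
    (A : Set ℕ)
    (h : ∀ ε : ℝ, 0 < ε → ∃ n₀ : ℕ, ∀ n ≥ n₀,
      (∑' α : ↥(symmDiff (Aseq n) A), (1 : ℝ≥0∞) / ((α : ℕ) : ℝ≥0∞) ^ 2)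
        < ENNReal.ofReal ε) :
    A = ⋃ m : ℕ, ⋂ n : ℕ, ⋂ (_ : m ≤ n), Aseq n := by
  have key : ∀ k : ℕ, ∃ n₀ : ℕ, ∀ n ≥ n₀, (k ∈ Aseq n ↔ k ∈ A) := by
    intro k
    obtain ⟨n₀, hn₀⟩ := h (1 / ((k : ℝ) + 1) ^ 2) (by positivity)
    refine ⟨n₀, fun n hn => ?_⟩
    by_contra hk
    have hmem : k ∈ symmDiff (Aseq n) A := by
      rw [Set.mem_symmDiff]; tauto
    have hle : (1 : ℝ≥0∞) / ((k : ℕ) : ℝ≥0∞) ^ 2 ≤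
        ∑' α : ↥(symmDiff (Aseq n) A), (1 : ℝ≥0∞) / ((α : ℕ) : ℝ≥0∞) ^ 2 :=
      ENNReal.le_tsum (⟨k, hmem⟩ : ↥(symmDiff (Aseq n) A))
    have hofr : ENNReal.ofReal (1 / ((k : ℝ) + 1) ^ 2) ≤ (1 : ℝ≥0∞) / ((k : ℕ) : ℝ≥0∞) ^ 2 := by
      rcases Nat.eq_zero_or_pos k with hk0 | hk0
      · subst hk0; simp
      · have hkpos : (0 : ℝ) < (k : ℝ) := by exact_mod_cast hk0
        have h1 : ENNReal.ofReal (1 / ((k : ℝ) + 1) ^ 2) ≤ ENNReal.ofReal (1 / (k : ℝ) ^ 2) := by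
          apply ENNReal.ofReal_le_ofReal
          apply one_div_le_one_div_of_le (by positivity)
          nlinarith
        refine h1.trans_eq ?_
        rw [one_div, ENNReal.ofReal_inv_of_pos (by positivity), one_div,
          ENNReal.ofReal_pow hkpos.le, ENNReal.ofReal_natCast]
    exact absurd (hn₀ n hn) (not_lt.mpr (hofr.trans hle))
  ext x
  simp only [Set.mem_iUnion, Set.mem_iInter]
  constructor
  · intro hx
    obtain ⟨n₀, hn₀⟩ := key x
    exact ⟨n₀, fun n hn => (hn₀ n hn).mpr hx⟩
  · rintro ⟨m, hm⟩
    obtain ⟨n₀, hn₀⟩ := key x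
    exact (hn₀ (max m n₀) (le_max_right _ _)).mp (hm _ (le_max_left _ _))
end

section
/- Let (A_n)_{n∈ℕ} be a sequence of additive bases that pseudoconverges to an additive basis A. Then there exists n₀ ∈ ℕ such that o(A_n) ≥ o(A) for all n ≥ n₀. -/
/-- If a sequence `(A_n)` of additive bases pseudoconverges to an additive basis `A`, then
there is `n₀` with `o(A_n) ≥ o(A)` for all `n ≥ n₀`. -/
theorem order_ge_of_pseudoconv (Aseq : ℕ → Set ℕ) (hseq : ∀ n, IsAddBasis (Aseq n))
    (A : Set ℕ) (hA : IsAddBasis A)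
    (hp : ∀ ε : ℝ, 0 < ε → ∃ n₀ : ℕ, ∀ n ≥ n₀, sdSum (Aseq n) A < ε) :
    ∃ n₀ : ℕ, ∀ n ≥ n₀, basisOrder A ≤ basisOrder (Aseq n) := by
  classical
  set h := basisOrder A with hh
  have hwit : ∀ k, 1 ≤ k → k < h →
      ∃ m : ℕ, ¬ ∃ f : Fin k → ℕ, (∀ i, f i ∈ A) ∧ ∑ i, f i = m := by
    intro k hk1 hkh
    have hk : k ∉ {h : ℕ | 1 ≤ h ∧ ∀ n : ℕ,
        ∃ f : Fin h → ℕ, (∀ i, f i ∈ A) ∧ ∑ i, f i = n} :=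
      Nat.notMem_of_lt_sInf hkh
    simp only [Set.mem_setOf_eq, not_and] at hk
    have := hk hk1
    push_neg at this
    obtain ⟨mm, hmm⟩ := this
    exact ⟨mm, fun ⟨f, hf, hs⟩ => hmm f hf hs⟩
  let m : ℕ → ℕ := fun k => if hk : 1 ≤ k ∧ k < h then (hwit k hk.1 hk.2).choose else 0
  let M := Finset.sup (Finset.range h) m
  have hε : (0:ℝ) < 1/((M+1:ℕ):ℝ)^2 := by positivity
  obtain ⟨n₀, hn₀⟩ := hp _ hε
  refine ⟨n₀, fun n hn => ?_⟩
  by_contra hlt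
  push_neg at hlt
  set k := basisOrder (Aseq n) with hk
  have hSne : {h : ℕ | 1 ≤ h ∧ ∀ n' : ℕ,
      ∃ f : Fin h → ℕ, (∀ i, f i ∈ Aseq n) ∧ ∑ i, f i = n'}.Nonempty := by
    obtain ⟨-, h', h1, hrep⟩ := hseq n
    exact ⟨h', h1, hrep⟩
  have hkmem := Nat.sInf_mem hSne
  have hk1 : 1 ≤ k := hkmem.1
  have hkcond : 1 ≤ k ∧ k < h := ⟨hk1, hlt⟩
  -- agreement on [0, M]
  have hagree : ∀ a : ℕ, a ∈ Aseq n → a ≤ M → a ∈ A := by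
    intro a ha haM
    by_contra haA
    have hmem : a ∈ symmDiff (Aseq n) A := Or.inl ⟨ha, haA⟩
    have ha0 : a ≠ 0 := fun h0 => haA (h0 ▸ hA.1)
    have ha1 : 1 ≤ a := Nat.one_le_iff_ne_zero.mpr ha0
    have hsummable : Summable (fun α : ↥(symmDiff (Aseq n) A) => (1:ℝ)/((α:ℕ):ℝ)^2) := by
      have : Summable (fun j : ℕ => (1:ℝ)/(j:ℝ)^2) :=
        (Real.summable_one_div_nat_pow).mpr one_lt_two
      exact this.subtype _
    have hterm : (1:ℝ)/((a:ℕ):ℝ)^2 ≤ sdSum (Aseq n) A := by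
      have := Summable.le_tsum hsummable ⟨a, hmem⟩ (fun j _ => by positivity)
      exact this
    have hcast : ((a:ℝ))^2 < ((M+1:ℕ):ℝ)^2 := by
      have : (a:ℝ) < ((M+1:ℕ):ℝ) := by exact_mod_cast Nat.lt_succ_of_le haM
      have ha' : (0:ℝ) ≤ (a:ℝ) := by positivity
      nlinarith
    have hlt2 : (1:ℝ)/((M+1:ℕ):ℝ)^2 < 1/((a:ℝ))^2 := by
      apply one_div_lt_one_div_of_lt
      · have : (1:ℝ) ≤ (a:ℝ) := by exact_mod_cast ha1
        nlinarith
      · exact hcast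
    have := hn₀ n hn
    linarith
  -- derive contradiction from the witness
  obtain ⟨f, hfmem, hfsum⟩ := hkmem.2 (m k)
  have hmM : m k ≤ M := Finset.le_sup (Finset.mem_range.mpr hlt)
  have hfle : ∀ i, f i ≤ m k := by
    intro i
    rw [← hfsum]
    exact Finset.single_le_sum (fun j _ => Nat.zero_le _) (Finset.mem_univ i)
  have hfA : ∀ i, f i ∈ A := fun i => hagree (f i) (hfmem i) (le_trans (hfle i) hmM)
  have hspec := (hwit k hkcond.1 hkcond.2).choose_spec
  have hmk : m k = (hwit k hkcond.1 hkcond.2).choose := by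
    simp only [m, dif_pos hkcond]
  exact hspec (hmk ▸ ⟨f, hfA, hfsum⟩)
end

section
/- Let (A_n)_{n∈ℕ} be a sequence of additive bases that pseudoconverges to an additive basis A. If there exists M > 0 such that fwc(A_n) ≤ M for all n ∈ ℕ, then A_n converges to A in the metric d. -/
/-- `o_A(n)`: the least `h ≥ 1` such that `n` is a sum of `h` elements of `A`. -/
noncomputable def localOrder (A : Set ℕ) (n : ℕ) : ℕ :=
  sInf {h : ℕ | 1 ≤ h ∧ ∃ f : Fin h → ℕ, (∀ i, f i ∈ A) ∧ ∑ i, f i = n}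

/-- The first worst case `fwc(A) = min {n | o_A(n) = o(A)}`. -/
noncomputable def fwc (A : Set ℕ) : ℕ :=
  sInf {n : ℕ | localOrder A n = basisOrder A}

lemma basisOrder_mem {A : Set ℕ} (hA : IsAddBasis A) :
    basisOrder A ∈ {h : ℕ | 1 ≤ h ∧ ∀ n : ℕ, ∃ f : Fin h → ℕ, (∀ i, f i ∈ A) ∧ ∑ i, f i = n} :=
  Nat.sInf_mem hA.2

lemma localOrder_mem {A : Set ℕ} (hA : IsAddBasis A) (n : ℕ) :
    localOrder A n ∈ {h : ℕ | 1 ≤ h ∧ ∃ f : Fin h → ℕ, (∀ i, f i ∈ A) ∧ ∑ i, f i = n} := by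
  obtain ⟨h1, hrep⟩ := basisOrder_mem hA
  exact Nat.sInf_mem ⟨basisOrder A, h1, hrep n⟩

lemma localOrder_le {A : Set ℕ} (hA : IsAddBasis A) (n : ℕ) :
    localOrder A n ≤ basisOrder A := by
  obtain ⟨h1, hrep⟩ := basisOrder_mem hA
  exact Nat.sInf_le ⟨h1, hrep n⟩

lemma pad_rep {A : Set ℕ} (h0 : 0 ∈ A) {k h n : ℕ} (hkh : k ≤ h)
    (hf : ∃ f : Fin k → ℕ, (∀ i, f i ∈ A) ∧ ∑ i, f i = n) :
    ∃ f : Fin h → ℕ, (∀ i, f i ∈ A) ∧ ∑ i, f i = n := by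
  obtain ⟨f, hfA, hfs⟩ := hf
  set g : ℕ → ℕ := fun i => if hi : i < k then f ⟨i, hi⟩ else 0 with hg
  refine ⟨fun i => g i, fun i => ?_, ?_⟩
  · by_cases hi : (i : ℕ) < k
    · simpa [hg, hi] using hfA ⟨i, hi⟩
    · simpa [hg, hi] using h0
  · calc ∑ i : Fin h, g i = ∑ i ∈ Finset.range h, g i := Fin.sum_univ_eq_sum_range g h
      _ = ∑ i ∈ Finset.range k, g i := (Finset.sum_subset (Finset.range_subset_range.2 hkh)
          (fun x _ hx => dif_neg (by simpa using hx))).symm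
      _ = ∑ i : Fin k, g i := (Fin.sum_univ_eq_sum_range g k).symm
      _ = ∑ i : Fin k, f i := Finset.sum_congr rfl (fun i _ => by simp [hg, i.is_lt])
      _ = n := hfs

lemma localOrder_fwc {A : Set ℕ} (hA : IsAddBasis A) :
    localOrder A (fwc A) = basisOrder A := by
  have hne : {n : ℕ | localOrder A n = basisOrder A}.Nonempty := by
    by_contra hc
    rw [Set.not_nonempty_iff_eq_empty] at hc
    have hlt : ∀ n, localOrder A n < basisOrder A := by
      intro n
      have := localOrder_le hA n
      rcases this.lt_or_eq with h | h
      · exact h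
      · exact absurd (Set.eq_empty_iff_forall_notMem.1 hc n h) not_false
    have hb1 : 1 ≤ basisOrder A := (basisOrder_mem hA).1
    have hb2 : 2 ≤ basisOrder A := by
      by_contra h
      have h1 := hlt 0
      have h2 := (localOrder_mem hA 0).1
      omega
    have hmem : basisOrder A - 1 ∈
        {h : ℕ | 1 ≤ h ∧ ∀ n : ℕ, ∃ f : Fin h → ℕ, (∀ i, f i ∈ A) ∧ ∑ i, f i = n} := by
      refine ⟨by omega, fun n => ?_⟩
      exact pad_rep hA.1 (by have := hlt n; omega) (localOrder_mem hA n).2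
    have hle2 : basisOrder A ≤ basisOrder A - 1 := Nat.sInf_le hmem
    clear hmem hc hlt
    omega
  exact Nat.sInf_mem hne

lemma localOrder_congr {A B : Set ℕ} {n : ℕ} (h : ∀ m ≤ n, (m ∈ A ↔ m ∈ B)) :
    localOrder A n = localOrder B n := by
  have key : ∀ (C D : Set ℕ) (k : ℕ), (∀ m ≤ n, (m ∈ C ↔ m ∈ D)) →
      (∃ f : Fin k → ℕ, (∀ i, f i ∈ C) ∧ ∑ i, f i = n) →
      (∃ f : Fin k → ℕ, (∀ i, f i ∈ D) ∧ ∑ i, f i = n) := by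
    rintro C D k hCD ⟨f, hfC, hfs⟩
    refine ⟨f, fun i => ?_, hfs⟩
    have hle : f i ≤ n := hfs ▸ Finset.single_le_sum (fun j _ => Nat.zero_le _) (Finset.mem_univ i)
    exact (hCD _ hle).1 (hfC i)
  have hset : {k : ℕ | 1 ≤ k ∧ ∃ f : Fin k → ℕ, (∀ i, f i ∈ A) ∧ ∑ i, f i = n}
      = {k : ℕ | 1 ≤ k ∧ ∃ f : Fin k → ℕ, (∀ i, f i ∈ B) ∧ ∑ i, f i = n} := by
    ext k
    constructor
    · rintro ⟨h1, h2⟩; exact ⟨h1, key A B k h h2⟩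
    · rintro ⟨h1, h2⟩; exact ⟨h1, key B A k (fun m hm => (h m hm).symm) h2⟩
  unfold localOrder
  rw [hset]

lemma sdSum_summable (A B : Set ℕ) :
    Summable (fun α : ↥(symmDiff A B) => (1 : ℝ) / ((α : ℕ) : ℝ) ^ 2) := by
  have : Summable (fun n : ℕ => (1 : ℝ) / (n : ℝ) ^ 2) :=
    Real.summable_one_div_nat_pow.2 one_lt_two
  exact this.subtype _

lemma sdSum_nonneg (A B : Set ℕ) : 0 ≤ sdSum A B :=
  tsum_nonneg fun α => by positivity

lemma le_sdSum {A B : Set ℕ} {m : ℕ} (hm : m ∈ symmDiff A B) :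
    (1 : ℝ) / (m : ℝ) ^ 2 ≤ sdSum A B :=
  Summable.le_tsum (sdSum_summable A B) ⟨m, hm⟩ fun _ _ => by positivity

/-- If a sequence `(A_n)` of additive bases pseudoconverges to an additive basis `A` and
there is `M > 0` with `fwc(A_n) ≤ M` for all `n`, then `A_n → A` in the metric `d`. -/
theorem tendsto_of_pseudoconv_of_fwc_bounded (Aseq : ℕ → Set ℕ)
    (hseq : ∀ n, IsAddBasis (Aseq n)) (A : Set ℕ) (hA : IsAddBasis A)
    (hp : ∀ ε : ℝ, 0 < ε → ∃ n₀ : ℕ, ∀ n ≥ n₀, sdSum (Aseq n) A < ε)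
    (hM : ∃ M : ℝ, 0 < M ∧ ∀ n : ℕ, (fwc (Aseq n) : ℝ) ≤ M) :
    Filter.Tendsto (fun n : ℕ => basisDist (Aseq n) A) Filter.atTop (nhds 0) := by
  obtain ⟨M, hM0, hMb⟩ := hM
  rw [Metric.tendsto_atTop]
  intro ε hε
  set N : ℕ := max (⌈M⌉₊) (fwc A) with hN
  have hδpos : (0 : ℝ) < min ε (1 / ((N : ℝ) + 1) ^ 2) := lt_min hε (by positivity)
  obtain ⟨n₀, hn₀⟩ := hp _ hδpos
  refine ⟨n₀, fun n hn => ?_⟩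
  have hsd := hn₀ n hn
  have hagree : ∀ m ≤ N, (m ∈ Aseq n ↔ m ∈ A) := by
    intro m hm
    by_contra hne
    have hmem : m ∈ symmDiff (Aseq n) A := by
      rw [Set.mem_symmDiff]
      tauto
    have hm0 : m ≠ 0 := by
      rintro rfl
      rw [Set.mem_symmDiff] at hmem
      rcases hmem with ⟨_, h2⟩ | ⟨_, h2⟩
      exacts [h2 hA.1, h2 (hseq n).1]
    have h1m : (1 : ℝ) ≤ (m : ℝ) := by exact_mod_cast Nat.one_le_iff_ne_zero.2 hm0
    have hmN : (m : ℝ) ≤ (N : ℝ) := by exact_mod_cast hm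
    have hlb : (1 : ℝ) / ((N : ℝ) + 1) ^ 2 ≤ 1 / (m : ℝ) ^ 2 := by
      apply one_div_le_one_div_of_le (by positivity)
      nlinarith
    have h3 := le_sdSum hmem
    have h4 := min_le_right ε (1 / ((N : ℝ) + 1) ^ 2)
    linarith
  have horder : basisOrder (Aseq n) = basisOrder A := by
    have hfn : fwc (Aseq n) ≤ N := by
      have h1 : (fwc (Aseq n) : ℝ) ≤ (⌈M⌉₊ : ℝ) := (hMb n).trans (Nat.le_ceil M)
      exact le_max_of_le_left (by exact_mod_cast h1)
    have hfA : fwc A ≤ N := le_max_right _ _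
    have e1 : basisOrder (Aseq n) = localOrder A (fwc (Aseq n)) :=
      (localOrder_fwc (hseq n)).symm.trans
        (localOrder_congr (fun m hm => hagree m (hm.trans hfn)))
    have e2 : basisOrder A = localOrder (Aseq n) (fwc A) :=
      (localOrder_fwc hA).symm.trans
        (localOrder_congr (fun m hm => (hagree m (hm.trans hfA)).symm))
    have l1 : basisOrder (Aseq n) ≤ basisOrder A := by
      rw [e1]; exact localOrder_le hA _
    have l2 : basisOrder A ≤ basisOrder (Aseq n) := by
      rw [e2]; exact localOrder_le (hseq n) _
    omega
  have hbd : basisDist (Aseq n) A = sdSum (Aseq n) A := by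
    unfold basisDist
    rw [horder]
    simp
  rw [Real.dist_eq, sub_zero, hbd, abs_of_nonneg (sdSum_nonneg _ _)]
  exact lt_of_lt_of_le hsd (min_le_left _ _)
end
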